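/- arXiv:2103.09653 — 3 statements merged into one kernel-verified Lean document; each statement's English description precedes it below -/
import Mathlib

section
/- For any r ∈ ℤ, M ∈ ℕ, α_j ∈ ℕ, h, k coprime integers with k ≥ 1, and z ∈ ℂ with Re(z) > 0, the theta function satisfies θ(r, 2M; 2α_j(h/k + iz/k)) = (e^{πi α_j h r²/(Mk)} / (2√(Mk α_j z))) · Σ_{ν∈ℤ} e^{-πν²/(4Mk α_j z) + πi r ν/(Mk)} G(2M α_j h, 2r α_j h + ν; k), where the square root is the principal branch. -/
open Complex Real

/-- The theta function `θ(r, M; τ) := Σ_{ν ≡ r (mod M)} e^{2πiτ ν²/(2M)}`. -/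
noncomputable def thetaFn (r M : ℕ) (τ : ℂ) : ℂ :=
  ∑' ν : ℤ, if (ν : ZMod M) = (r : ZMod M) then
    Complex.exp (2 * (Real.pi : ℂ) * Complex.I * τ * (ν : ℂ) ^ 2 / (2 * M)) else 0

/-- The Gauss sum `G(a, b; c) := Σ_{ℓ mod c} e^{2πi(aℓ² + bℓ)/c}`. -/
noncomputable def gaussSum' (a b c : ℤ) : ℂ :=
  ∑ ℓ ∈ Finset.range c.toNat,
    Complex.exp (2 * (Real.pi : ℂ) * Complex.I * ((a : ℂ) * (ℓ : ℂ) ^ 2 + (b : ℂ) * ℓ) / (c : ℂ))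

/-!
Put `τ' = τ / (2M) = (b + i s) / m` with `m = M k`, `b = α h`, `s = α z`; the theta series is
the sum of the Jacobi theta terms `exp (π i ν² τ')` over the progression `ν = 2M t + r`.
Splitting `t` by its residue `ℓ` modulo `k` turns each class into the progression `2 m n + a`,
`a = 2M ℓ + r`, whose sum is `exp (π i a² τ') ϑ(2 m a τ', 4 m² τ')` with `ϑ = jacobiTheta₂`.
The real parts `2 a b` and `4 m b` of these arguments are periods of `ϑ`, and Jacobi's
functional equation turns what remains, `ϑ(i A a / (2m), i A)` with `A = 4 m s`, into
`A^(-1/2) exp (π A a² / (4 m²)) ϑ(a / (2m), i / A)`. Expanding this last series in `ν` and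
summing over `ℓ` produces `G(2M b, 2 r b + ν; k)`.
-/

lemma tsum_ite_intCast_eq_tsum_mul_add {α : Type*} [AddCommMonoid α] [TopologicalSpace α]
    {M : ℕ} (hM : M ≠ 0) (r : ℤ) (f : ℤ → α) :
    ∑' ν : ℤ, (if (ν : ZMod M) = r then f ν else 0) = ∑' t : ℤ, f (M * t + r) := by
  have hinj : Function.Injective fun t : ℤ ↦ (M : ℤ) * t + r := fun a b hab ↦ by
    simpa [hM] using hab
  have hsupp : Function.support (fun ν : ℤ ↦ if (ν : ZMod M) = r then f ν else 0) ⊆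
      Set.range fun t : ℤ ↦ (M : ℤ) * t + r := by
    intro ν hν
    have hν' : (ν : ZMod M) = r := by
      by_contra hne
      exact hν (if_neg hne)
    obtain ⟨t, ht⟩ := (ZMod.intCast_eq_intCast_iff_dvd_sub r ν M).1 hν'.symm
    exact ⟨t, by linarith⟩
  rw [← hinj.tsum_eq hsupp]
  exact tsum_congr fun t ↦ if_pos (by simp)

lemma thetaFn_eq_tsum_jacobiTheta₂_term (r : ℕ) {M : ℕ} (hM : M ≠ 0) (τ : ℂ) :
    thetaFn r M τ = ∑' t : ℤ, jacobiTheta₂_term (M * t + r) 0 (τ / M) := by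
  rw [thetaFn, ← Int.cast_natCast (R := ZMod M) r, tsum_ite_intCast_eq_tsum_mul_add hM]
  refine tsum_congr fun t ↦ ?_
  have hM' : (M : ℂ) ≠ 0 := Nat.cast_ne_zero.2 hM
  rw [jacobiTheta₂_term]
  congr 1
  push_cast
  field_simp
  ring

lemma tsum_int_eq_sum_range_tsum {R : Type*} [AddCommGroup R] [UniformSpace R]
    [IsUniformAddGroup R] [CompleteSpace R] [T0Space R] {f : ℤ → R} (hf : Summable f)
    (K : ℕ) [NeZero K] :
    ∑' t, f t = ∑ ℓ ∈ Finset.range K, ∑' n : ℤ, f (n * K + ℓ) := by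
  let e : Fin K × ℤ ≃ ℤ := (Equiv.prodComm _ _).trans (Int.divModEquiv K).symm
  have hfe : Summable fun p ↦ f (e p) := e.summable_iff.2 hf
  rw [← e.tsum_eq, hfe.tsum_prod, tsum_fintype,
    ← Fin.sum_univ_eq_sum_range fun ℓ ↦ ∑' n : ℤ, f (n * K + ℓ)]
  rfl

lemma summable_jacobiTheta₂_term_mul_add {m : ℤ} (hm : m ≠ 0) (a : ℤ) (z : ℂ) {τ : ℂ}
    (hτ : 0 < τ.im) : Summable fun n : ℤ ↦ jacobiTheta₂_term (m * n + a) z τ :=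
  ((summable_jacobiTheta₂_term_iff z τ).2 hτ).comp_injective fun x y hxy ↦ by
    simpa [hm] using hxy

lemma tsum_jacobiTheta₂_term_mul_add (m a : ℤ) (τ : ℂ) :
    ∑' n : ℤ, jacobiTheta₂_term (m * n + a) 0 τ =
      cexp (π * I * a ^ 2 * τ) * jacobiTheta₂ (m * a * τ) (m ^ 2 * τ) := by
  rw [jacobiTheta₂, ← tsum_mul_left]
  refine tsum_congr fun n ↦ ?_
  simp only [jacobiTheta₂_term, ← Complex.exp_add]
  congr 1
  push_cast
  ring

lemma jacobiTheta₂_add_intCast_add_two_mul_intCast (z τ : ℂ) (p q : ℤ) :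
    jacobiTheta₂ (z + p) (τ + 2 * q) = jacobiTheta₂ z τ := by
  have hz : Function.Periodic (jacobiTheta₂ · τ) 1 := fun z ↦ jacobiTheta₂_add_left z τ
  have hτ : Function.Periodic (jacobiTheta₂ (z + p)) 2 := fun τ ↦ jacobiTheta₂_add_right _ τ
  rw [mul_comm, hτ.int_mul q τ]
  simpa using hz.int_mul p z

lemma jacobiTheta₂_I_mul_functional_equation {A : ℂ} (hA : A ≠ 0) (c : ℂ) :
    jacobiTheta₂ (I * A * c) (I * A) =
      cexp (π * A * c ^ 2) / A ^ (1 / 2 : ℂ) * jacobiTheta₂ c (I / A) := by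
  have hIA : -I * (I * A) = A := by linear_combination -A * I_sq
  have hexp : -π * I * (I * A * c) ^ 2 / (I * A) = π * A * c ^ 2 := by
    rw [div_eq_iff (mul_ne_zero I_ne_zero hA)]
    linear_combination -π * I * A ^ 2 * c ^ 2 * I_sq
  have hz : I * A * c / (I * A) = c := by field_simp
  have hτ : -1 / (I * A) = I / A := by
    field_simp
    linear_combination -I_sq
  rw [jacobiTheta₂_functional_equation, hIA, hexp, hz, hτ, div_mul_eq_mul_div, one_mul]

lemma tsum_jacobiTheta₂_term_two_mul_add_eq {m : ℤ} (hm : m ≠ 0) (b a : ℤ) {s : ℂ} (hs : s ≠ 0) :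
    ∑' n : ℤ, jacobiTheta₂_term (2 * m * n + a) 0 ((b + I * s) / m) =
      1 / (4 * m * s) ^ (1 / 2 : ℂ) *
        (cexp (π * I * b * a ^ 2 / m) * jacobiTheta₂ (a / (2 * m)) (I / (4 * m * s))) := by
  have hm' : (m : ℂ) ≠ 0 := Int.cast_ne_zero.2 hm
  have hA : (4 * m * s : ℂ) ≠ 0 := by simp [hm', hs]
  have hz : ((2 * m : ℤ) : ℂ) * a * ((b + I * s) / m) =
      I * (4 * m * s) * (a / (2 * m)) + (2 * a * b : ℤ) := by
    push_cast
    field_simp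
    ring
  have hτ : ((2 * m : ℤ) : ℂ) ^ 2 * ((b + I * s) / m) = I * (4 * m * s) + 2 * (2 * m * b : ℤ) := by
    push_cast
    field_simp
    ring
  have hexp : cexp (π * I * a ^ 2 * ((b + I * s) / m)) * cexp (π * (4 * m * s) * (a / (2 * m)) ^ 2)
      = cexp (π * I * b * a ^ 2 / m) := by
    rw [← Complex.exp_add]
    congr 1
    field_simp
    linear_combination 4 * a ^ 2 * s * I_sq
  rw [tsum_jacobiTheta₂_term_mul_add, hz, hτ, jacobiTheta₂_add_intCast_add_two_mul_intCast,
    jacobiTheta₂_I_mul_functional_equation hA]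
  linear_combination jacobiTheta₂ (a / (2 * m)) (I / (4 * m * s)) / (4 * m * s) ^ (1 / 2 : ℂ) * hexp

lemma sum_range_exp_mul_jacobiTheta₂_term (M k b r ν : ℤ) (hM : M ≠ 0) (hk : k ≠ 0) (A : ℂ) :
    ∑ ℓ ∈ Finset.range k.toNat,
        cexp (π * I * b * (2 * M * ℓ + r : ℂ) ^ 2 / (M * k)) *
          jacobiTheta₂_term ν ((2 * M * ℓ + r : ℂ) / (2 * (M * k))) (I / A) =
      cexp (π * I * b * r ^ 2 / (M * k)) *
        (cexp (-π * ν ^ 2 / A + π * I * r * ν / (M * k)) *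
          gaussSum' (2 * M * b) (2 * r * b + ν) k) := by
  have hM' : (M : ℂ) ≠ 0 := Int.cast_ne_zero.2 hM
  have hk' : (k : ℂ) ≠ 0 := Int.cast_ne_zero.2 hk
  rw [gaussSum', Finset.mul_sum, Finset.mul_sum]
  refine Finset.sum_congr rfl fun ℓ _ ↦ ?_
  simp only [jacobiTheta₂_term, ← Complex.exp_add]
  congr 1
  push_cast
  field_simp
  linear_combination (M * k * ν ^ 2 / A) * I_sq

lemma im_I_div_pos {w : ℂ} (hw : 0 < w.re) : 0 < (I / w).im := by
  rw [div_eq_mul_inv, I_mul_im, inv_re]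
  exact div_pos hw (normSq_pos.2 (ne_zero_of_re_pos hw))

lemma tsum_jacobiTheta₂_term_eq_tsum_gaussSum' {M k : ℤ} (hM : 0 < M) (hk : 0 < k) (b r : ℤ)
    {s : ℂ} (hs : 0 < s.re) :
    ∑' t : ℤ, jacobiTheta₂_term (2 * M * t + r) 0 ((b + I * s) / (M * k)) =
      1 / (4 * (M * k) * s) ^ (1 / 2 : ℂ) *
        ∑' ν : ℤ, cexp (π * I * b * r ^ 2 / (M * k)) *
          (cexp (-π * ν ^ 2 / (4 * (M * k) * s) + π * I * r * ν / (M * k)) *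
            gaussSum' (2 * M * b) (2 * r * b + ν) k) := by
  have hMk : 0 < M * k := mul_pos hM hk
  have hMk' : (0 : ℝ) < M * k := by exact_mod_cast hMk
  have : NeZero k.toNat := ⟨by omega⟩
  have hτ : 0 < ((b + I * s) / (M * k)).im := by
    rw [← ofReal_intCast M, ← ofReal_intCast k, ← ofReal_mul, div_ofReal_im]
    simpa using div_pos hs hMk'
  have hA : 0 < (4 * (M * k) * s : ℂ).re := by
    rw [show (4 * (M * k) * s : ℂ) = ((4 * (M * k) : ℝ) : ℂ) * s by push_cast; ring, re_ofReal_mul]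
    exact mul_pos (by positivity) hs
  have hres (ℓ : ℕ) :
      ∑' n : ℤ, jacobiTheta₂_term (2 * M * (n * k.toNat + ℓ) + r) 0 ((b + I * s) / (M * k)) =
        1 / (4 * (M * k) * s) ^ (1 / 2 : ℂ) *
          (cexp (π * I * b * (2 * M * ℓ + r : ℂ) ^ 2 / (M * k)) *
            jacobiTheta₂ ((2 * M * ℓ + r : ℂ) / (2 * (M * k))) (I / (4 * (M * k) * s))) := by
    have := tsum_jacobiTheta₂_term_two_mul_add_eq hMk.ne' b (2 * M * ℓ + r) (ne_zero_of_re_pos hs)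
    push_cast at this
    rw [← this, Int.toNat_of_nonneg hk.le]
    congr! 3 with n
    ring
  rw [tsum_int_eq_sum_range_tsum (summable_jacobiTheta₂_term_mul_add (by omega) _ _ hτ) k.toNat,
    Finset.sum_congr rfl fun ℓ _ ↦ hres ℓ, ← Finset.mul_sum]
  congr 1
  simp only [jacobiTheta₂, ← tsum_mul_left]
  rw [← Summable.tsum_finsetSum fun ℓ _ ↦
    ((summable_jacobiTheta₂_term_iff _ _).2 (im_I_div_pos hA)).mul_left _]
  exact tsum_congr fun ν ↦ sum_range_exp_mul_jacobiTheta₂_term M k b r ν hM.ne' hk.ne' _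

lemma ofReal_mul_cpow {a : ℝ} (ha : 0 < a) {w : ℂ} (hw : w ≠ 0) (s : ℂ) :
    ((a : ℂ) * w) ^ s = (a : ℂ) ^ s * w ^ s := by
  have ha' : (a : ℂ) ≠ 0 := ofReal_ne_zero.2 ha.ne'
  rw [cpow_def_of_ne_zero (mul_ne_zero ha' hw), log_ofReal_mul ha hw, add_mul, Complex.exp_add,
    ← cpow_def_of_ne_zero hw, ofReal_log ha.le, ← cpow_def_of_ne_zero ha']

lemma four_mul_cpow_one_half {w : ℂ} (hw : w ≠ 0) :
    (4 * w) ^ (1 / 2 : ℂ) = 2 * w ^ (1 / 2 : ℂ) := by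
  have h4 : (4 : ℂ) ^ (1 / 2 : ℂ) = 2 := by
    rw [one_div, show (4 : ℂ) = 2 ^ 2 by norm_num, sq_cpow_two_inv (by norm_num)]
  rw [← ofReal_ofNat, ofReal_mul_cpow (by norm_num) hw, ofReal_ofNat, h4]

theorem theta_transformation_general (r M αj : ℕ) (hM : 0 < M) (hαj : 0 < αj)
    (h k : ℤ) (hk : 1 ≤ k) (z : ℂ) (hz : 0 < z.re) :
    thetaFn r (2 * M) (2 * (αj : ℂ) * ((h : ℂ) / k + Complex.I * z / k))
      = Complex.exp ((Real.pi : ℂ) * Complex.I * αj * h * (r : ℂ) ^ 2 / ((M : ℂ) * k))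
          / (2 * ((M : ℂ) * k * αj * z) ^ (1 / 2 : ℂ))
        * ∑' ν : ℤ,
            Complex.exp (-(Real.pi : ℂ) * (ν : ℂ) ^ 2 / (4 * M * k * αj * z)
                + (Real.pi : ℂ) * Complex.I * r * ν / ((M : ℂ) * k))
              * gaussSum' (2 * M * αj * h) (2 * r * αj * h + ν) k := by
  have hk' : (k : ℂ) ≠ 0 := Int.cast_ne_zero.2 (by omega)
  have hs : 0 < ((αj : ℂ) * z).re := by simpa using mul_pos (Nat.cast_pos.2 hαj) hz
  have hτ : 2 * (αj : ℂ) * ((h : ℂ) / k + I * z / k) / ((2 * M : ℕ) : ℂ) =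
      (((αj * h : ℤ) : ℂ) + I * (αj * z)) / (((M : ℤ) : ℂ) * k) := by
    push_cast
    field_simp
  have hw : ((M : ℂ) * k * αj * z) ≠ 0 := by
    rw [show (M * k * αj * z : ℂ) = M * k * (αj * z) by ring]
    exact mul_ne_zero (mul_ne_zero (Nat.cast_ne_zero.2 hM.ne') hk') (ne_zero_of_re_pos hs)
  rw [thetaFn_eq_tsum_jacobiTheta₂_term r (by positivity), hτ]
  simp only [Nat.cast_mul, Nat.cast_ofNat]
  rw [tsum_jacobiTheta₂_term_eq_tsum_gaussSum' (by omega) (by omega) _ _ hs, ← tsum_mul_left,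
    ← tsum_mul_left]
  refine tsum_congr fun ν ↦ ?_
  push_cast
  rw [show 4 * (M * k : ℂ) * (αj * z) = 4 * (M * k * αj * z) by ring, four_mul_cpow_one_half hw]
  ring_nf

/-- Modular transformation of the theta function: for coprime `h, k` with `k ≥ 1` and
`Re z > 0`,
`θ(r, 2M; 2α_j(h/k + iz/k)) = (e^{πi α_j h r²/(Mk)}/(2√(Mk α_j z)))
  Σ_{ν ∈ ℤ} e^{-πν²/(4Mk α_j z) + πi r ν/(Mk)} G(2Mα_j h, 2rα_j h + ν; k)`
with the principal branch of the square root. -/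
theorem theta_transformation (r M αj : ℕ) (hM : 0 < M) (hr : r ≤ M - 1) (hαj : 0 < αj)
    (h k : ℤ) (hk : 1 ≤ k) (hcop : IsCoprime h k) (z : ℂ) (hz : 0 < z.re) :
    thetaFn r (2 * M) (2 * (αj : ℂ) * ((h : ℂ) / k + Complex.I * z / k))
      = Complex.exp ((Real.pi : ℂ) * Complex.I * αj * h * (r : ℂ) ^ 2 / ((M : ℂ) * k))
          / (2 * ((M : ℂ) * k * αj * z) ^ (1 / 2 : ℂ))
        * ∑' ν : ℤ,
            Complex.exp (-(Real.pi : ℂ) * (ν : ℂ) ^ 2 / (4 * M * k * αj * z)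
                + (Real.pi : ℂ) * Complex.I * r * ν / ((M : ℂ) * k))
              * gaussSum' (2 * M * αj * h) (2 * r * αj * h + ν) k :=
  theta_transformation_general r M αj hM hαj h k hk z hz
end

section
/- For A > 0 and w ∈ ℂ with |w| = 1 and Re(w) > 0, define J_{0,±} := 2Aw ∫_{1/2±1}^{∞} e^{-Awx²} dx (sign + gives lower limit 3/2, sign − gives lower limit −1/2). Then there exists c > 0 (independent of A and w) such that J_{0,−} = 2√(πAw) + O(√A · e^{-cA·Re(w)} / √(Re(w))) and J_{0,+} = O(√A · e^{-cA·Re(w)} / √(Re(w))). -/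
/-!
Since `Re (A w) > 0`, the Gaussian integral over `ℝ` is `(π / (A w))^(1/2)`, and for the principal
branch `A w · (π / (A w))^(1/2) = (π A w)^(1/2)`. Hence `J_{0,-} - 2 (π A w)^(1/2)` is
`-2 A w ∫_{-∞}^{-1/2} e^{-A w x²} dx`, and both remainders are integrals over sets on which
`x² ≥ 1/4`. There `|e^{-A w x²}| = e^{-A Re(w) x²} ≤ e^{-A Re(w) / 8} e^{-A Re(w) x² / 2}`, and the
last factor integrates over `ℝ` to `√(2π / (A Re w))`; with `|2 A w| = 2 A` this gives
`c = 1/8` and `C = 2 √(2π)`.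
-/

open Complex Real

open MeasureTheory Set

theorem Complex.ofReal_mul_cpow_one_half {x : ℝ} (hx : 0 < x) {b : ℂ} (hb : b ≠ 0)
    (hb_arg : b.arg ≠ π) : ((x : ℂ) * b) ^ (1 / 2 : ℂ) = b * ((x : ℂ) / b) ^ (1 / 2 : ℂ) := by
  have hx' : (x : ℂ) ≠ 0 := ofReal_ne_zero.2 hx.ne'
  rw [cpow_def_of_ne_zero (mul_ne_zero hx' hb), cpow_def_of_ne_zero (div_ne_zero hx' hb),
    div_eq_mul_inv (x : ℂ), log_ofReal_mul hx hb, log_ofReal_mul hx (inv_ne_zero hb),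
    log_inv b hb_arg]
  nth_rewrite 2 [← exp_log hb]
  rw [← Complex.exp_add]
  ring_nf

theorem mul_integral_Ioi_cexp_neg_mul_sq_sub {b : ℂ} (hb : 0 < b.re) (a : ℝ) :
    b * (∫ x in Ioi a, cexp (-b * (x : ℂ) ^ 2)) - ((π : ℂ) * b) ^ (1 / 2 : ℂ)
      = -(b * ∫ x in Iic a, cexp (-b * (x : ℂ) ^ 2)) := by
  have hb0 : b ≠ 0 := fun h => by simp [h] at hb
  have hb_arg : b.arg ≠ π := fun h => by linarith [(arg_eq_pi_iff.1 h).1]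
  have hint := integrable_cexp_neg_mul_sq hb
  have hsplit := intervalIntegral.integral_Iic_add_Ioi (b := a) hint.integrableOn hint.integrableOn
  rw [integral_gaussian_complex hb] at hsplit
  rw [ofReal_mul_cpow_one_half pi_pos hb0 hb_arg, ← hsplit]
  ring

theorem norm_setIntegral_cexp_neg_mul_sq_le {b : ℂ} (hb : 0 < b.re) {s : Set ℝ}
    (hs : MeasurableSet s) {δ : ℝ} (hδ : ∀ x ∈ s, δ ≤ x ^ 2) :
    ‖∫ x in s, cexp (-b * (x : ℂ) ^ 2)‖ ≤ Real.exp (-b.re * δ / 2) * √(π / (b.re / 2)) := by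
  have hb2 : 0 < b.re / 2 := half_pos hb
  have hint := integrable_exp_neg_mul_sq hb2
  calc ‖∫ x in s, cexp (-b * (x : ℂ) ^ 2)‖
      ≤ ∫ x in s, Real.exp (-b.re * x ^ 2) := by
        refine (norm_integral_le_integral_norm _).trans_eq (integral_congr_ae ?_)
        filter_upwards with x
        rw [norm_exp, ← ofReal_pow, neg_mul, neg_re, re_mul_ofReal, neg_mul]
    _ ≤ ∫ x in s, Real.exp (-b.re * δ / 2) * Real.exp (-(b.re / 2) * x ^ 2) := by
        refine setIntegral_mono_on (integrable_exp_neg_mul_sq hb).integrableOn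
          (hint.const_mul _).integrableOn hs fun x hx => ?_
        rw [← Real.exp_add, Real.exp_le_exp]
        nlinarith [hδ x hx]
    _ = Real.exp (-b.re * δ / 2) * ∫ x in s, Real.exp (-(b.re / 2) * x ^ 2) :=
        integral_const_mul _ _
    _ ≤ Real.exp (-b.re * δ / 2) * ∫ x, Real.exp (-(b.re / 2) * x ^ 2) := by
        refine mul_le_mul_of_nonneg_left ?_ (Real.exp_pos _).le
        exact setIntegral_le_integral hint (.of_forall fun x => (Real.exp_pos _).le)
    _ = Real.exp (-b.re * δ / 2) * √(π / (b.re / 2)) := by rw [integral_gaussian]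

theorem norm_two_mul_mul_setIntegral_cexp_le {A : ℝ} (hA : 0 < A) {w : ℂ} (hw : ‖w‖ = 1)
    (hw_re : 0 < w.re) {s : Set ℝ} (hs : MeasurableSet s) (hs_sq : ∀ x ∈ s, 1 / 4 ≤ x ^ 2) :
    ‖2 * (A : ℂ) * w * ∫ x in s, cexp (-(A : ℂ) * w * (x : ℂ) ^ 2)‖
      ≤ 2 * √(2 * π) * √A * Real.exp (-(1 / 8) * A * w.re) / √w.re := by
  have hre : ((A : ℂ) * w).re = A * w.re := re_ofReal_mul A w
  have hb : 0 < ((A : ℂ) * w).re := hre ▸ mul_pos hA hw_re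
  have hnorm : ‖2 * (A : ℂ) * w‖ = 2 * A := by simp [hw, hA.le]
  rw [norm_mul, hnorm, neg_mul]
  calc 2 * A * ‖∫ x in s, cexp (-((A : ℂ) * w) * (x : ℂ) ^ 2)‖
      ≤ 2 * A * (Real.exp (-(A * w.re) * (1 / 4) / 2) * √(π / (A * w.re / 2))) := by
        refine mul_le_mul_of_nonneg_left ?_ (by positivity)
        simpa only [hre] using norm_setIntegral_cexp_neg_mul_sq_le hb hs hs_sq
    _ = 2 * √(2 * π) * √A * Real.exp (-(1 / 8) * A * w.re) / √w.re := by
        rw [show π / (A * w.re / 2) = 2 * π / (A * w.re) by ring, Real.sqrt_div (by positivity),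
          Real.sqrt_mul hA.le, show -(A * w.re) * (1 / 4) / 2 = -(1 / 8) * A * w.re by ring]
        field_simp
        exact (Real.sq_sqrt hA.le).symm

/-- For `A > 0` and `w` on the unit circle with `Re w > 0`, the Gaussian integrals
`J_{0,±} := 2Aw ∫_{1/2±1}^∞ e^{-Awx²} dx` satisfy, with constants `c, C > 0` independent
of `A` and `w`: `J_{0,−} = 2√(πAw) + O(√A e^{-cA Re w}/√(Re w))` and
`J_{0,+} = O(√A e^{-cA Re w}/√(Re w))` (principal branch square root). -/
theorem gaussian_tail_integrals :
    ∃ c > (0 : ℝ), ∃ C > (0 : ℝ), ∀ A : ℝ, 0 < A → ∀ w : ℂ, ‖w‖ = 1 → 0 < w.re →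
      ‖(2 * (A : ℂ) * w
            * (∫ x in Set.Ioi ((1 : ℝ) / 2 - 1), Complex.exp (-(A : ℂ) * w * (x : ℂ) ^ 2))
          - 2 * ((Real.pi : ℂ) * A * w) ^ (1 / 2 : ℂ))‖
        ≤ C * Real.sqrt A * Real.exp (-c * A * w.re) / Real.sqrt w.re
      ∧ ‖(2 * (A : ℂ) * w
            * ∫ x in Set.Ioi ((1 : ℝ) / 2 + 1), Complex.exp (-(A : ℂ) * w * (x : ℂ) ^ 2))‖
        ≤ C * Real.sqrt A * Real.exp (-c * A * w.re) / Real.sqrt w.re := by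
  refine ⟨1 / 8, by norm_num, 2 * √(2 * π), by positivity, fun A hA w hw hw_re => ⟨?_, ?_⟩⟩
  · have hb : 0 < ((A : ℂ) * w).re := by simpa using mul_pos hA hw_re
    have hsplit :
        2 * (A : ℂ) * w * (∫ x in Ioi ((1 : ℝ) / 2 - 1), cexp (-(A : ℂ) * w * (x : ℂ) ^ 2))
            - 2 * ((π : ℂ) * A * w) ^ (1 / 2 : ℂ)
          = -(2 * (A : ℂ) * w
              * ∫ x in Iic ((1 : ℝ) / 2 - 1), cexp (-(A : ℂ) * w * (x : ℂ) ^ 2)) := by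
      rw [neg_mul, mul_assoc (π : ℂ)]
      linear_combination 2 * mul_integral_Ioi_cexp_neg_mul_sq_sub hb (1 / 2 - 1)
    rw [hsplit, norm_neg]
    exact norm_two_mul_mul_setIntegral_cexp_le hA hw hw_re measurableSet_Iic
      fun x hx => by nlinarith [mem_Iic.1 hx]
  · exact norm_two_mul_mul_setIntegral_cexp_le hA hw hw_re measurableSet_Ioi
      fun x hx => by nlinarith [mem_Ioi.1 hx]
end

section
/- Let c > 0, k ∈ ℕ, M ∈ ℕ, and let ℓ be an integer with 1 - Mk ≤ ℓ ≤ Mk and ℓ ≠ 0. Then for any R ≥ 1/2, the sum Σ*_{ν≥0} Σ_{±} log(|ℓ ± 2Mkν|) e^{-c(ℓ ± 2Mkν)² R} (where the ν = 0 term is counted with weight 1/2) converges absolutely and is bounded by C·e^{-cℓ²R/2} for a constant C depending only on c (not on ℓ, M, k, R). -/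
lemma aux_log_exp (c : ℝ) (hc : 0 < c) (x : ℝ) (hx : 1 ≤ x) :
    Real.log x * Real.exp (-(c * x ^ 2 / 8)) ≤ 8 / c := by
  have hx0 : (0 : ℝ) < x := lt_of_lt_of_le one_pos hx
  have h1 : Real.log x ≤ x := (Real.log_le_sub_one_of_pos hx0).trans (by linarith)
  have hy : (0:ℝ) < c * x ^ 2 / 8 := by positivity
  have h2 : Real.exp (-(c * x ^ 2 / 8)) ≤ 8 / (c * x ^ 2) := by
    rw [Real.exp_neg]
    have : c * x ^ 2 / 8 ≤ Real.exp (c * x ^ 2 / 8) := by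
      linarith [Real.add_one_le_exp (c * x ^ 2 / 8)]
    rw [inv_eq_one_div]
    calc 1 / Real.exp (c * x ^ 2 / 8) ≤ 1 / (c * x ^ 2 / 8) := by
          apply one_div_le_one_div_of_le hy this
      _ = 8 / (c * x ^ 2) := by field_simp
  have h3 : Real.log x * Real.exp (-(c * x ^ 2 / 8)) ≤ x * (8 / (c * x ^ 2)) :=
    mul_le_mul h1 h2 (Real.exp_nonneg _) hx0.le
  have h4 : x * (8 / (c * x ^ 2)) = 8 / (c * x) := by
    field_simp
  have h5 : 8 / (c * x) ≤ 8 / c := by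
    apply div_le_div_of_nonneg_left (by norm_num) hc
    nlinarith
  linarith [h3, h4 ▸ h3]

lemma term_bound (c : ℝ) (hc : 0 < c) (R : ℝ) (hR : 1/2 ≤ R) (L t d : ℝ)
    (hd1 : 1 ≤ |d|) (hL : L ^ 2 ≤ d ^ 2) (ht : t ≤ d ^ 2) (ht0 : 0 ≤ t) :
    Real.log |d| * Real.exp (-c * d ^ 2 * R) ≤
      8 / c * Real.exp (t * -(c / 8)) * Real.exp (-c * L ^ 2 * R / 2) := by
  have hlog : 0 ≤ Real.log |d| := Real.log_nonneg hd1
  have hd2 : (0:ℝ) ≤ d ^ 2 := sq_nonneg d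
  have e1 : Real.exp (-c * d ^ 2 * R) ≤
      Real.exp (-(c * |d| ^ 2 / 8)) * (Real.exp (t * -(c / 8)) * Real.exp (-c * L ^ 2 * R / 2)) := by
    rw [← Real.exp_add, ← Real.exp_add, sq_abs]
    apply Real.exp_le_exp.mpr
    nlinarith [mul_nonneg (mul_nonneg hc.le (sub_nonneg.mpr hL)) (by linarith : (0:ℝ) ≤ R),
      mul_nonneg (mul_nonneg hc.le hd2) (by linarith : (0:ℝ) ≤ R - 1/2),
      mul_nonneg hc.le (sub_nonneg.mpr ht)]
  calc Real.log |d| * Real.exp (-c * d ^ 2 * R)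
      ≤ Real.log |d| * (Real.exp (-(c * |d| ^ 2 / 8)) * (Real.exp (t * -(c / 8)) * Real.exp (-c * L ^ 2 * R / 2))) := by
        apply mul_le_mul_of_nonneg_left e1 hlog
    _ = (Real.log |d| * Real.exp (-(c * |d| ^ 2 / 8))) * Real.exp (t * -(c / 8)) * Real.exp (-c * L ^ 2 * R / 2) := by ring
    _ ≤ (8 / c) * Real.exp (t * -(c / 8)) * Real.exp (-c * L ^ 2 * R / 2) := by
        have := aux_log_exp c hc |d| hd1
        gcongr

lemma one_le_shift (a L t : ℝ) (ha : 1 ≤ a) (hLa : |L| ≤ a) (ht : 1 ≤ t) :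
    1 ≤ L + 2 * a * t := by
  obtain ⟨h1, h2⟩ := abs_le.mp hLa
  nlinarith [mul_nonneg (by linarith : (0:ℝ) ≤ a) (by linarith : (0:ℝ) ≤ t - 1)]

lemma nu_bound (c R : ℝ) (hc : 0 < c) (hR : 1/2 ≤ R) (a L t : ℝ)
    (ha : 1 ≤ a) (hLa : |L| ≤ a) (ht : 1 ≤ t) :
    Real.log |L + 2 * a * t| * Real.exp (-c * (L + 2 * a * t) ^ 2 * R) ≤
      8 / c * Real.exp (t * -(c / 8)) * Real.exp (-c * L ^ 2 * R / 2) := by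
  obtain ⟨h1, h2⟩ := abs_le.mp hLa
  have hd : 1 ≤ L + 2 * a * t := one_le_shift a L t ha hLa ht
  set d := L + 2 * a * t with hdd
  have hd1 : 1 ≤ |d| := hd.trans (le_abs_self d)
  have hL2 : L ^ 2 ≤ d ^ 2 := by
    nlinarith [mul_nonneg (by nlinarith : (0:ℝ) ≤ d - L) (by nlinarith : (0:ℝ) ≤ d + L)]
  have ht2 : t ≤ d ^ 2 := by nlinarith
  exact term_bound c hc R hR L t d hd1 hL2 ht2 (by linarith)

/-- For `c > 0` there is `C > 0` (depending only on `c`) such that for all `k, M ∈ ℕ`,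
`1 - Mk ≤ ℓ ≤ Mk` with `ℓ ≠ 0`, and `R ≥ 1/2`, the weighted sum
`Σ*_{ν≥0} Σ_± log|ℓ ± 2Mkν| e^{-c(ℓ±2Mkν)²R}` (the `ν = 0` term weighted by `1/2`)
converges absolutely and is at most `C e^{-cℓ²R/2}`. -/
theorem log_gaussian_sum_bound (c : ℝ) (hc : 0 < c) :
    ∃ C > (0 : ℝ), ∀ k M : ℕ, 0 < k → 0 < M → ∀ ℓ : ℤ,
      1 - (M : ℤ) * k ≤ ℓ → ℓ ≤ (M : ℤ) * k → ℓ ≠ 0 → ∀ R : ℝ, 1 / 2 ≤ R →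
      Summable (fun ν : ℕ => (if ν = 0 then (1 / 2 : ℝ) else 1) *
          (Real.log |(ℓ : ℝ) + 2 * M * k * ν| * Real.exp (-c * ((ℓ : ℝ) + 2 * M * k * ν) ^ 2 * R)
           + Real.log |(ℓ : ℝ) - 2 * M * k * ν| * Real.exp (-c * ((ℓ : ℝ) - 2 * M * k * ν) ^ 2 * R)))
      ∧ (∑' ν : ℕ, (if ν = 0 then (1 / 2 : ℝ) else 1) *
          (Real.log |(ℓ : ℝ) + 2 * M * k * ν| * Real.exp (-c * ((ℓ : ℝ) + 2 * M * k * ν) ^ 2 * R)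
           + Real.log |(ℓ : ℝ) - 2 * M * k * ν| * Real.exp (-c * ((ℓ : ℝ) - 2 * M * k * ν) ^ 2 * R)))
        ≤ C * Real.exp (-c * (ℓ : ℝ) ^ 2 * R / 2) := by
  set r : ℝ := Real.exp (-(c / 8)) with hr
  have hr0 : 0 ≤ r := Real.exp_nonneg _
  have hr1 : r < 1 := Real.exp_lt_one_iff.mpr (by linarith)
  have hrpos : 0 < 1 - r := by linarith
  refine ⟨16 / c * (1 - r)⁻¹, by positivity, ?_⟩
  intro k M hk hM ℓ hl1 hl2 hl0 R hR
  set L : ℝ := (ℓ : ℝ) with hLdef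
  set E : ℝ := Real.exp (-c * L ^ 2 * R / 2) with hE
  have hE0 : 0 ≤ E := Real.exp_nonneg _
  have ha1 : (1 : ℝ) ≤ (M : ℝ) * (k : ℝ) := by
    have : (1:ℝ) ≤ (M:ℝ) := by exact_mod_cast hM
    have : (1:ℝ) ≤ (k:ℝ) := by exact_mod_cast hk
    nlinarith
  have hcast1 : (1:ℝ) - (M:ℝ) * k ≤ L := by rw [hLdef]; exact_mod_cast hl1
  have hcast2 : L ≤ (M:ℝ) * k := by rw [hLdef]; exact_mod_cast hl2
  have hLa : |L| ≤ (M : ℝ) * (k : ℝ) := abs_le.mpr ⟨by linarith, hcast2⟩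
  have hL1 : 1 ≤ |L| := by
    have h : (1:ℤ) ≤ |ℓ| := Int.one_le_abs hl0
    rw [hLdef]
    exact_mod_cast h
  set f : ℕ → ℝ := fun ν : ℕ => (if ν = 0 then (1 / 2 : ℝ) else 1) *
          (Real.log |L + 2 * M * k * ν| * Real.exp (-c * (L + 2 * M * k * ν) ^ 2 * R)
           + Real.log |L - 2 * M * k * ν| * Real.exp (-c * (L - 2 * M * k * ν) ^ 2 * R)) with hf
  have hnn : ∀ ν, 0 ≤ f ν := by
    intro ν
    have key : ∀ x : ℝ, 1 ≤ |x| → 0 ≤ Real.log |x| * Real.exp (-c * x ^ 2 * R) :=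
      fun x hx => mul_nonneg (Real.log_nonneg hx) (Real.exp_nonneg _)
    rcases Nat.eq_zero_or_pos ν with h0 | hpos
    · subst h0
      have e : L + 2 * (M:ℝ) * k * ((0:ℕ):ℝ) = L := by push_cast; ring
      have e' : L - 2 * (M:ℝ) * k * ((0:ℕ):ℝ) = L := by push_cast; ring
      simp only [hf, reduceIte]
      rw [e, e']
      linarith [key L hL1]
    · have hofν : (1:ℝ) ≤ (ν:ℝ) := by exact_mod_cast hpos
      have h1 : 1 ≤ L + 2 * (M:ℝ) * k * ν := by
        have := one_le_shift ((M:ℝ)*k) L ν ha1 hLa hofν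
        linarith [this]
      have h2 : 1 ≤ -L + 2 * (M:ℝ) * k * ν := by
        have := one_le_shift ((M:ℝ)*k) (-L) ν ha1 (by rwa [abs_neg]) hofν
        linarith [this]
      have := key _ (h1.trans (le_abs_self _))
      have h2' : 1 ≤ |L - 2 * (M:ℝ) * k * ν| := by
        rw [show L - 2 * (M:ℝ) * k * ν = -(-L + 2 * (M:ℝ) * k * ν) by ring, abs_neg]
        exact h2.trans (le_abs_self _)
      have := key _ h2'
      simp only [hf, if_neg (Nat.pos_iff_ne_zero.mp hpos)]
      nlinarith [key _ (h1.trans (le_abs_self _)), key _ h2']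
  have hbound : ∀ ν, f ν ≤ (16 / c * E) * r ^ ν := by
    intro ν
    rcases Nat.eq_zero_or_pos ν with h0 | hpos
    · subst h0
      have e : L + 2 * (M:ℝ) * k * ((0:ℕ):ℝ) = L := by push_cast; ring
      have e' : L - 2 * (M:ℝ) * k * ((0:ℕ):ℝ) = L := by push_cast; ring
      simp only [hf, pow_zero, mul_one, reduceIte]
      rw [e, e']
      have hb := term_bound c hc R hR L 0 L hL1 le_rfl (by nlinarith) le_rfl
      rw [zero_mul, Real.exp_zero, mul_one] at hb
      rw [hE]
      have hpx : 0 ≤ 8 / c * Real.exp (-c * L ^ 2 * R / 2) :=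
        mul_nonneg (div_nonneg (by norm_num) hc.le) (Real.exp_nonneg _)
      have h16 : 16 / c * Real.exp (-c * L ^ 2 * R / 2)
          = 2 * (8 / c * Real.exp (-c * L ^ 2 * R / 2)) := by ring
      linarith
    · have hofν : (1:ℝ) ≤ (ν:ℝ) := by exact_mod_cast hpos
      have hplus := nu_bound c R hc hR ((M:ℝ)*k) L ν ha1 hLa hofν
      have hminus := nu_bound c R hc hR ((M:ℝ)*k) (-L) ν ha1 (by rwa [abs_neg]) hofν
      rw [show -L + 2 * ((M:ℝ)*k) * ν = -(L - 2 * (M:ℝ) * k * ν) by ring, abs_neg, neg_sq, neg_sq] at hminus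
      rw [show L + 2 * ((M:ℝ)*k) * ν = L + 2 * (M:ℝ) * k * ν by ring] at hplus
      have hrn : Real.exp ((ν:ℝ) * -(c / 8)) = r ^ ν := by
        rw [hr, ← Real.exp_nat_mul]
      simp only [hf, if_neg (Nat.pos_iff_ne_zero.mp hpos), one_mul]
      rw [hE]
      calc Real.log |L + 2 * (M:ℝ) * k * ν| * Real.exp (-c * (L + 2 * (M:ℝ) * k * ν) ^ 2 * R)
           + Real.log |L - 2 * (M:ℝ) * k * ν| * Real.exp (-c * (L - 2 * (M:ℝ) * k * ν) ^ 2 * R)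
          ≤ 8 / c * Real.exp ((ν:ℝ) * -(c / 8)) * Real.exp (-c * L ^ 2 * R / 2)
            + 8 / c * Real.exp ((ν:ℝ) * -(c / 8)) * Real.exp (-c * L ^ 2 * R / 2) := by
            exact add_le_add hplus hminus
        _ = (16 / c * Real.exp (-c * L ^ 2 * R / 2)) * Real.exp ((ν:ℝ) * -(c / 8)) := by ring
        _ = (16 / c * Real.exp (-c * L ^ 2 * R / 2)) * r ^ ν := by rw [hrn]
  have hg : Summable (fun ν : ℕ => (16 / c * E) * r ^ ν) :=
    (summable_geometric_of_lt_one hr0 hr1).mul_left _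
  have hfs : Summable f := Summable.of_nonneg_of_le hnn hbound hg
  refine ⟨hfs, ?_⟩
  have htsum : ∑' ν, f ν ≤ ∑' ν : ℕ, (16 / c * E) * r ^ ν := Summable.tsum_le_tsum hbound hfs hg
  rw [tsum_mul_left, tsum_geometric_of_lt_one hr0 hr1] at htsum
  calc ∑' ν, f ν ≤ 16 / c * E * (1 - r)⁻¹ := htsum
    _ = 16 / c * (1 - r)⁻¹ * E := by ring
end
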